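/- Let A ∈ B₊(H) and define L₊(A) = {B ∈ B₊(H) : B ≤ cA for some c > 0} and 𝓛₊(A) its norm closure. If B ∈ 𝓛₊(A), then 𝓛₊(B) ⊆ 𝓛₊(A). -/

import Mathlib

/-!
Let `0 ≤ C ≤ c B`. With `W_ε = B (B + ε)⁻¹` we have `W_ε C W_ε = B Z B` for
`Z = (B + ε)⁻¹ C (B + ε)⁻¹ ≥ 0`, and `W_ε C W_ε → C` as `ε → 0⁺`, because
`‖C^{1/2} (1 - W_ε)‖² = ‖(1 - W_ε) C (1 - W_ε)‖ ≤ c ‖(1 - W_ε) B (1 - W_ε)‖ ≤ c ε`.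
On the other hand `X ↦ X Z X` is continuous and maps `L₊(A)` into itself, since
`X Z X ≤ ‖Z‖ ‖X‖ X` for `X ≥ 0`; hence `B Z B ∈ 𝓛₊(A)` whenever `B ∈ 𝓛₊(A)`.
-/

variable {H : Type*} [NormedAddCommGroup H] [InnerProductSpace ℂ H] [CompleteSpace H]

/-- `L₊(A)`: the cone of nonnegative operators dominated by a positive multiple of `A`. -/
def Lplus (A : H →L[ℂ] H) : Set (H →L[ℂ] H) :=
  {B | B.IsPositive ∧ ∃ c : ℝ, 0 < c ∧ (c • A - B).IsPositive}

open Filter Topology CFC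

section CStarAlgebra

variable {𝒜 : Type*} [CStarAlgebra 𝒜] [PartialOrder 𝒜] [StarOrderedRing 𝒜]

lemma mul_self_le_norm_smul {a : 𝒜} (ha : 0 ≤ a) : a * a ≤ ‖a‖ • a := by
  set s := sqrt a
  have hs : IsSelfAdjoint s := (sqrt_nonneg a).isSelfAdjoint
  have hss : s * s = a := sqrt_mul_sqrt_self a ha
  calc a * a = star s * a * s := by rw [hs.star_eq, ← hss]; simp only [mul_assoc]
    _ ≤ ‖a‖ • (star s * s) := CStarAlgebra.star_left_conjugate_le_norm_smul
    _ = ‖a‖ • a := by rw [hs.star_eq, hss]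

lemma conjugate_le_norm_mul_norm_smul {a b : 𝒜} (ha : 0 ≤ a) (hb : 0 ≤ b) :
    a * b * a ≤ (‖b‖ * ‖a‖) • a := by
  have hsa : IsSelfAdjoint a := ha.isSelfAdjoint
  calc a * b * a = star a * b * a := by rw [hsa.star_eq]
    _ ≤ ‖b‖ • (star a * a) := CStarAlgebra.star_left_conjugate_le_norm_smul
    _ ≤ ‖b‖ • (‖a‖ • a) := by rw [hsa.star_eq]; gcongr; exact mul_self_le_norm_smul ha
    _ = (‖b‖ * ‖a‖) • a := smul_smul _ _ _

lemma norm_sqrt_mul_le_of_le {b c d : 𝒜} {r : ℝ} (hc : 0 ≤ c) (hr : 0 ≤ r) (hcb : c ≤ r • b)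
    (hd : IsSelfAdjoint d) : ‖sqrt c * d‖ ≤ √(r * ‖d * b * d‖) := by
  set s := sqrt c
  have hs : IsSelfAdjoint s := (sqrt_nonneg c).isSelfAdjoint
  have hss : s * s = c := sqrt_mul_sqrt_self c hc
  rw [Real.le_sqrt (norm_nonneg _) (by positivity)]
  calc ‖s * d‖ ^ 2 = ‖d * c * d‖ := by
        rw [sq, ← CStarRing.norm_star_mul_self, star_mul, hd.star_eq, hs.star_eq, ← hss]
        simp only [mul_assoc]
    _ ≤ ‖r • (d * b * d)‖ := by
        refine CStarAlgebra.norm_le_norm_of_nonneg_of_le (hd.conjugate_nonneg hc) ?_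
        simpa only [mul_smul_comm, smul_mul_assoc] using hd.conjugate_le_conjugate hcb
    _ = r * ‖d * b * d‖ := by rw [norm_smul, Real.norm_of_nonneg hr]

lemma norm_conjugate_sub_self_le {c w : 𝒜} (hc : 0 ≤ c) (hw : IsSelfAdjoint w) (hw₁ : ‖w‖ ≤ 1) :
    ‖w * c * w - c‖ ≤ 2 * ‖sqrt c‖ * ‖sqrt c * (1 - w)‖ := by
  set s := sqrt c
  set d := 1 - w
  have hs : IsSelfAdjoint s := (sqrt_nonneg c).isSelfAdjoint
  have hd : IsSelfAdjoint d := (IsSelfAdjoint.one 𝒜).sub hw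
  have hds : ‖d * s‖ = ‖s * d‖ := by rw [← norm_star, star_mul, hd.star_eq, hs.star_eq]
  have hdecomp : w * c * w - c = -(d * s * (s * w)) - s * (s * d) := by
    rw [← sqrt_mul_sqrt_self c hc]; simp only [d, s]; noncomm_ring
  calc ‖w * c * w - c‖ ≤ ‖d * s‖ * (‖s‖ * ‖w‖) + ‖s‖ * ‖s * d‖ := by
        rw [hdecomp]
        refine (norm_sub_le _ _).trans (add_le_add ?_ (norm_mul_le _ _))
        rw [norm_neg]
        exact (norm_mul_le _ _).trans (by gcongr; exact norm_mul_le _ _)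
    _ ≤ 2 * ‖s‖ * ‖s * d‖ := by
        rw [hds]
        nlinarith [mul_nonneg (norm_nonneg s) (norm_nonneg (s * d))]

lemma continuousOn_inv_add_spectrum {b : 𝒜} (hb : 0 ≤ b) {ε : ℝ} (hε : 0 < ε) :
    ContinuousOn (fun t : ℝ => (t + ε)⁻¹) (spectrum ℝ b) :=
  ContinuousOn.inv₀ (by fun_prop) fun t ht => by
    have := spectrum_nonneg_of_nonneg hb ht
    positivity

/-- The approximate unit `b (b + ε)⁻¹` of the hereditary subalgebra generated by `b`. -/
noncomputable def approxUnit (b : 𝒜) (ε : ℝ) : 𝒜 := cfc (fun t : ℝ => t / (t + ε)) b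

lemma approxUnit_eq_mul_cfc {b : 𝒜} (hb : 0 ≤ b) {ε : ℝ} (hε : 0 < ε) :
    approxUnit b ε = b * cfc (fun t : ℝ => (t + ε)⁻¹) b := by
  simp only [approxUnit, div_eq_mul_inv]
  rw [cfc_mul (fun t : ℝ => t) _ b continuousOn_id (continuousOn_inv_add_spectrum hb hε),
    cfc_id' ℝ b]

lemma approxUnit_eq_cfc_mul {b : 𝒜} (hb : 0 ≤ b) {ε : ℝ} (hε : 0 < ε) :
    approxUnit b ε = cfc (fun t : ℝ => (t + ε)⁻¹) b * b := by
  simp only [approxUnit, div_eq_inv_mul]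
  rw [cfc_mul _ (fun t : ℝ => t) b (continuousOn_inv_add_spectrum hb hε) continuousOn_id,
    cfc_id' ℝ b]

lemma norm_approxUnit_le_one {b : 𝒜} (hb : 0 ≤ b) {ε : ℝ} (hε : 0 < ε) :
    ‖approxUnit b ε‖ ≤ 1 :=
  norm_cfc_le zero_le_one fun t ht => by
    have := spectrum_nonneg_of_nonneg hb ht
    rw [Real.norm_of_nonneg (by positivity), div_le_one (by positivity)]
    linarith

lemma norm_one_sub_approxUnit_conjugate_le {b : 𝒜} (hb : 0 ≤ b) {ε : ℝ} (hε : 0 < ε) :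
    ‖(1 - approxUnit b ε) * b * (1 - approxUnit b ε)‖ ≤ ε := by
  set g : ℝ → ℝ := fun t => ε * (t + ε)⁻¹
  have hg : ContinuousOn g (spectrum ℝ b) :=
    continuousOn_const.mul (continuousOn_inv_add_spectrum hb hε)
  have hd : 1 - approxUnit b ε = cfc g b := by
    have hf : ContinuousOn (fun t : ℝ => t / (t + ε)) (spectrum ℝ b) :=
      continuousOn_id.mul (continuousOn_inv_add_spectrum hb hε)
    rw [approxUnit, ← cfc_const_one ℝ b, ← cfc_sub _ _ b continuousOn_const hf]
    refine cfc_congr fun t ht => ?_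
    have := spectrum_nonneg_of_nonneg hb ht
    simp only [g]
    field_simp
    ring
  have hdbd :
      (1 - approxUnit b ε) * b * (1 - approxUnit b ε) = cfc (fun t => g t * t * g t) b := by
    rw [hd, cfc_mul (fun t => g t * t) g b (hg.mul continuousOn_id) hg,
      cfc_mul g (fun t : ℝ => t) b hg continuousOn_id, cfc_id' ℝ b]
  rw [hdbd]
  refine norm_cfc_le hε.le fun t ht => ?_
  have := spectrum_nonneg_of_nonneg hb ht
  rw [Real.norm_of_nonneg (by positivity)]
  simp only [g]
  field_simp
  nlinarith

lemma tendsto_approxUnit_conjugate {b c : 𝒜} {r : ℝ} (hb : 0 ≤ b) (hc : 0 ≤ c) (hr : 0 ≤ r)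
    (hcb : c ≤ r • b) :
    Tendsto (fun ε => approxUnit b ε * c * approxUnit b ε) (𝓝[>] 0) (𝓝 c) := by
  have hbound : ∀ ε > 0,
      ‖approxUnit b ε * c * approxUnit b ε - c‖ ≤ 2 * ‖sqrt c‖ * √(r * ε) := by
    intro ε hε
    have hw : IsSelfAdjoint (approxUnit b ε) := IsSelfAdjoint.cfc
    calc _ ≤ 2 * ‖sqrt c‖ * ‖sqrt c * (1 - approxUnit b ε)‖ :=
          norm_conjugate_sub_self_le hc hw (norm_approxUnit_le_one hb hε)
      _ ≤ 2 * ‖sqrt c‖ * √(r * ‖(1 - approxUnit b ε) * b * (1 - approxUnit b ε)‖) := by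
          gcongr
          exact norm_sqrt_mul_le_of_le hc hr hcb ((IsSelfAdjoint.one 𝒜).sub hw)
      _ ≤ 2 * ‖sqrt c‖ * √(r * ε) := by
          gcongr
          exact norm_one_sub_approxUnit_conjugate_le hb hε
  have hlim : Tendsto (fun ε : ℝ => 2 * ‖sqrt c‖ * √(r * ε)) (𝓝[>] 0) (𝓝 0) := by
    have hcont : Continuous fun ε : ℝ => 2 * ‖sqrt c‖ * √(r * ε) := by fun_prop
    simpa using (hcont.tendsto 0).mono_left nhdsWithin_le_nhds
  rw [tendsto_iff_norm_sub_tendsto_zero]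
  exact squeeze_zero' (Eventually.of_forall fun _ => norm_nonneg _)
    (eventually_nhdsWithin_of_forall hbound) hlim

lemma mem_closure_image_conjugate_of_le {b c : 𝒜} {r : ℝ} (hb : 0 ≤ b) (hc : 0 ≤ c) (hr : 0 ≤ r)
    (hcb : c ≤ r • b) : c ∈ closure ((fun z => b * z * b) '' Set.Ici 0) := by
  refine mem_closure_of_tendsto (tendsto_approxUnit_conjugate hb hc hr hcb)
    (eventually_nhdsWithin_of_forall fun ε (hε : 0 < ε) => ?_)
  set g := cfc (fun t : ℝ => (t + ε)⁻¹) b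
  refine ⟨g * c * g, IsSelfAdjoint.cfc.conjugate_nonneg hc, ?_⟩
  calc b * (g * c * g) * b = (b * g) * c * (g * b) := by simp only [mul_assoc]
    _ = approxUnit b ε * c * approxUnit b ε := by
        rw [← approxUnit_eq_mul_cfc hb hε, ← approxUnit_eq_cfc_mul hb hε]

end CStarAlgebra

omit [CompleteSpace H] in
lemma mem_Lplus_iff {A X : H →L[ℂ] H} :
    X ∈ Lplus A ↔ 0 ≤ X ∧ ∃ c : ℝ, 0 < c ∧ X ≤ c • A := by
  simp [Lplus, ContinuousLinearMap.le_def]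

lemma nonneg_of_mem_closure_Lplus {A B : H →L[ℂ] H} (hB : B ∈ closure (Lplus A)) : 0 ≤ B := by
  have hsub : Lplus A ⊆ {X | 0 ≤ X} := fun _ hX => (mem_Lplus_iff.mp hX).1
  exact closure_minimal hsub CStarAlgebra.isClosed_nonneg hB

lemma conjugate_mem_Lplus {A X Z : H →L[ℂ] H} (hX : X ∈ Lplus A) (hZ : 0 ≤ Z) :
    X * Z * X ∈ Lplus A := by
  obtain ⟨hX₀, c, hc, hXA⟩ := mem_Lplus_iff.mp hX
  refine mem_Lplus_iff.mpr ⟨conjugate_nonneg_of_nonneg hZ hX₀, (‖Z‖ * ‖X‖ + 1) * c,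
    by positivity, ?_⟩
  calc X * Z * X ≤ (‖Z‖ * ‖X‖) • X := conjugate_le_norm_mul_norm_smul hX₀ hZ
    _ ≤ (‖Z‖ * ‖X‖ + 1) • X := by gcongr; linarith
    _ ≤ (‖Z‖ * ‖X‖ + 1) • (c • A) := by gcongr
    _ = ((‖Z‖ * ‖X‖ + 1) * c) • A := smul_smul _ _ _

lemma conjugate_mem_closure_Lplus {A B Z : H →L[ℂ] H} (hB : B ∈ closure (Lplus A)) (hZ : 0 ≤ Z) :
    B * Z * B ∈ closure (Lplus A) :=
  map_mem_closure (f := fun X => X * Z * X) (by fun_prop) hB fun _ hX =>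
    conjugate_mem_Lplus hX hZ

theorem closure_Lplus_subset (A B : H →L[ℂ] H)
    (hB : B ∈ closure (Lplus A)) :
    closure (Lplus B) ⊆ closure (Lplus A) := by
  have hconj : (fun Z => B * Z * B) '' Set.Ici 0 ⊆ closure (Lplus A) := by
    rintro _ ⟨Z, hZ, rfl⟩
    exact conjugate_mem_closure_Lplus hB hZ
  refine closure_minimal (fun C hC => ?_) isClosed_closure
  obtain ⟨hC₀, c, hc, hCB⟩ := mem_Lplus_iff.mp hC
  exact closure_minimal hconj isClosed_closure <|
    mem_closure_image_conjugate_of_le (nonneg_of_mem_closure_Lplus hB) hC₀ hc.le hCB
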